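/- arXiv:2011.12078 — 2 statements merged into one kernel-verified Lean document; each statement's English description precedes it below -/
import Mathlib

section
/- Let k be a complete non-archimedean field and Q ∈ k[T] a monic polynomial all of whose roots (in an algebraic closure) have absolute value strictly greater than 1. Then 1/Q belongs to the Tate algebra k{T}, i.e., 1/Q is given by a power series Σ a_n T^n with |a_n| → 0. -/
open Filter Topology

/-!
Over the algebraic closure, `Q = ∏ (X - z)` with every `‖z‖ > 1`. Each coefficient `q_i`, `i ≥ 1`,
is up to sign a sum of products over proper sub-multisets of the roots, while `±q_0` is the product
of all of them; the ultrametric inequality gives `‖q_i‖ < ‖q_0‖`. As `Q` has finitely many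
coefficients, some `r < 1` satisfies `‖q_i‖ ≤ ‖q_0‖ r^i` for all `i`, and, again by the ultrametric
inequality, the recursion for the coefficients of `1/Q` propagates this to `‖a_n‖ ≤ ‖q_0‖⁻¹ r^n`.
-/

lemma IsUltrametricDist.of_norm_algebraMap (k L : Type*) [NormedField k] [IsUltrametricDist k]
    [NormedField L] [Algebra k L] (h : ∀ x : k, ‖algebraMap k L x‖ = ‖x‖) :
    IsUltrametricDist L :=
  isUltrametricDist_of_forall_norm_natCast_le_one fun n => by
    rw [← map_natCast (algebraMap k L), h]
    exact IsUltrametricDist.norm_natCast_le_one k n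

section Ultrametric

variable {L : Type*} [NormedField L]

lemma Multiset.one_le_norm_prod {s : Multiset L} (hs : ∀ z ∈ s, 1 ≤ ‖z‖) : 1 ≤ ‖s.prod‖ := by
  rw [← normHom_apply, map_multiset_prod]
  exact Multiset.one_le_prod_map hs

lemma Multiset.norm_prod_lt_norm_prod_of_lt {s t : Multiset L} (hst : s < t)
    (ht : ∀ z ∈ t, 1 < ‖z‖) : ‖s.prod‖ < ‖t.prod‖ := by
  obtain ⟨a, has⟩ := Multiset.lt_iff_cons_le.mp hst
  obtain ⟨u, rfl⟩ := Multiset.le_iff_exists_add.mp has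
  have hs : 1 ≤ ‖s.prod‖ :=
    Multiset.one_le_norm_prod fun z hz => (ht z (Multiset.mem_of_le hst.le hz)).le
  have hu : 1 ≤ ‖u.prod‖ := Multiset.one_le_norm_prod fun z hz => (ht z (by simp [hz])).le
  calc ‖s.prod‖ < ‖a‖ * ‖s.prod‖ := lt_mul_left (by linarith) (ht a (by simp))
    _ ≤ ‖a‖ * ‖s.prod‖ * ‖u.prod‖ := le_mul_of_one_le_right (by positivity) hu
    _ = ‖(a ::ₘ s + u).prod‖ := by rw [Multiset.prod_add, Multiset.prod_cons, norm_mul, norm_mul]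

variable [IsUltrametricDist L]

lemma Multiset.norm_esymm_lt_norm_prod {s : Multiset L} (hs : ∀ z ∈ s, 1 < ‖z‖) {j : ℕ}
    (hj : j < Multiset.card s) : ‖s.esymm j‖ < ‖s.prod‖ := by
  have hne : s.powersetCard j ≠ 0 := by
    simpa [← Multiset.card_pos, Multiset.card_powersetCard] using Nat.choose_pos hj.le
  obtain ⟨t, ht, hle⟩ := IsUltrametricDist.exists_norm_multiset_sum_le (s.powersetCard j)
    (f := Multiset.prod)
  obtain ⟨hts, hcard⟩ := Multiset.mem_powersetCard.mp (ht hne)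
  have hlt : t < s := lt_of_le_of_ne hts fun h => by rw [h] at hcard; omega
  exact hle.trans_lt (Multiset.norm_prod_lt_norm_prod_of_lt hlt hs)

theorem Polynomial.Monic.norm_coeff_lt_norm_coeff_zero {P : Polynomial L} (hP : P.Monic)
    (hsplit : P.Splits) (hroots : ∀ z ∈ P.roots, 1 < ‖z‖) {i : ℕ} (hi : i ≠ 0) :
    ‖P.coeff i‖ < ‖P.coeff 0‖ := by
  have hcard : Multiset.card P.roots = P.natDegree := Polynomial.splits_iff_card_roots.mp hsplit
  have hcoeff_zero : ‖P.coeff 0‖ = ‖P.roots.prod‖ := by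
    rw [hsplit.coeff_zero_eq_prod_roots_of_monic hP, norm_mul, norm_pow, norm_neg, norm_one,
      one_pow, one_mul]
  rw [hcoeff_zero]
  rcases le_or_gt i P.natDegree with hid | hid
  · rw [Polynomial.coeff_eq_esymm_roots_of_card hcard hid, hP.leadingCoeff, norm_mul, norm_mul,
      norm_pow, norm_neg, norm_one, one_pow, one_mul, one_mul]
    exact Multiset.norm_esymm_lt_norm_prod hroots (by omega)
  · rw [Polynomial.coeff_eq_zero_of_natDegree_lt hid, norm_zero]
    exact zero_lt_one.trans_le (Multiset.one_le_norm_prod fun z hz => (hroots z hz).le)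

end Ultrametric

lemma Polynomial.exists_norm_coeff_le_mul_pow {R : Type*} [SeminormedRing R] (Q : Polynomial R)
    (hQ : ∀ i ≠ 0, ‖Q.coeff i‖ < ‖Q.coeff 0‖) :
    ∃ r : ℝ, 0 ≤ r ∧ r < 1 ∧ ∀ i, ‖Q.coeff i‖ ≤ ‖Q.coeff 0‖ * r ^ i := by
  have hsupport : ∀ i ∈ Q.support, ∀ᶠ r in 𝓝[<] (1 : ℝ),
      ‖Q.coeff i‖ ≤ ‖Q.coeff 0‖ * r ^ i := fun i _ => by
    rcases eq_or_ne i 0 with rfl | hi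
    · simp
    have hlim : Tendsto (fun r : ℝ => ‖Q.coeff 0‖ * r ^ i) (𝓝[<] 1)
        (𝓝 ‖Q.coeff 0‖) := by
      simpa using ((continuous_pow i).const_mul ‖Q.coeff 0‖).continuousWithinAt.tendsto (x := 1)
    exact (hlim.eventually_const_lt (hQ i hi)).mono fun _ => le_of_lt
  have hpos : ∀ᶠ r in 𝓝[<] (1 : ℝ), 0 < r :=
    nhdsWithin_le_nhds (lt_mem_nhds one_pos)
  obtain ⟨r, ⟨hr0, hrQ⟩, hr1⟩ :=
    (hpos.and ((Q.support.eventually_all).2 hsupport)).and self_mem_nhdsWithin |>.exists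
  refine ⟨r, hr0.le, hr1, fun i => ?_⟩
  by_cases hi : i ∈ Q.support
  · exact hrQ i hi
  · rw [Polynomial.notMem_support_iff.mp hi, norm_zero]
    positivity

theorem PowerSeries.norm_coeff_inv_le {k : Type*} [NormedField k] [IsUltrametricDist k]
    {φ : PowerSeries k} {r : ℝ} (hr : 0 ≤ r)
    (hφ : ∀ i, ‖coeff i φ‖ ≤ ‖constantCoeff φ‖ * r ^ i) (n : ℕ) :
    ‖coeff n φ⁻¹‖ ≤ ‖constantCoeff φ‖⁻¹ * r ^ n := by
  set c := constantCoeff φ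
  rcases eq_or_ne c 0 with hc | hc
  · rw [PowerSeries.inv_eq_zero.mpr hc, map_zero, norm_zero]
    positivity
  induction n using Nat.strong_induction_on with
  | _ n ih =>
  rw [PowerSeries.coeff_inv]
  split_ifs with hn
  · simp [hn, c]
  rw [norm_mul, norm_neg, norm_inv]
  gcongr
  refine IsUltrametricDist.norm_sum_le_of_forall_le_of_nonneg (by positivity) fun x hx => ?_
  split_ifs with hx2
  · rw [Finset.HasAntidiagonal.mem_antidiagonal] at hx
    calc ‖coeff x.1 φ * coeff x.2 φ⁻¹‖
        ≤ (‖c‖ * r ^ x.1) * (‖c‖⁻¹ * r ^ x.2) := by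
          rw [norm_mul]; exact mul_le_mul (hφ _) (ih _ hx2) (norm_nonneg _) (by positivity)
      _ = r ^ n := by rw [← hx, pow_add]; field_simp
  · simp only [norm_zero]; positivity

theorem stmt2_general {k L : Type*} [NontriviallyNormedField k]
    [NormedField L] [Algebra k L] [IsAlgClosure k L]
    (hna : IsNonarchimedean (fun x : k => ‖x‖))
    (hext : ∀ x : k, ‖algebraMap k L x‖ = ‖x‖)
    (Q : Polynomial k) (hmonic : Q.Monic)
    (hroots : ∀ z : L, (Q.map (algebraMap k L)).IsRoot z → 1 < ‖z‖) :
    ∃ a : ℕ → k,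
      Tendsto (fun n => ‖a n‖) atTop (nhds 0) ∧
      (Q : PowerSeries k) * PowerSeries.mk a = 1 := by
  have : IsUltrametricDist k := .isUltrametricDist_of_isNonarchimedean_norm hna
  have : IsUltrametricDist L := .of_norm_algebraMap k L hext
  have : IsAlgClosed L := IsAlgClosure.isAlgClosed k
  have hcoeff : ∀ i ≠ 0, ‖Q.coeff i‖ < ‖Q.coeff 0‖ := fun i hi => by
    simpa only [Polynomial.coeff_map, hext] using
      (hmonic.map (algebraMap k L)).norm_coeff_lt_norm_coeff_zero (IsAlgClosed.splits _)
        (fun z hz => hroots z (Polynomial.isRoot_of_mem_roots hz)) hi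
  have hc : PowerSeries.constantCoeff (Q : PowerSeries k) ≠ 0 := by
    rw [Polynomial.constantCoeff_coe, ← norm_pos_iff]
    exact (norm_nonneg _).trans_lt (hcoeff 1 one_ne_zero)
  obtain ⟨r, hr0, hr1, hr⟩ := Q.exists_norm_coeff_le_mul_pow hcoeff
  refine ⟨fun n => PowerSeries.coeff n (Q : PowerSeries k)⁻¹, ?_, ?_⟩
  · refine squeeze_zero (fun n => norm_nonneg _)
      (PowerSeries.norm_coeff_inv_le hr0 (by simpa only [Polynomial.coeff_coe,
        Polynomial.constantCoeff_coe] using hr)) ?_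
    simpa using (tendsto_pow_atTop_nhds_zero_of_lt_one hr0 hr1).const_mul _
  · rw [show PowerSeries.mk _ = (Q : PowerSeries k)⁻¹ from
      PowerSeries.ext fun n => PowerSeries.coeff_mk n _]
    exact PowerSeries.mul_inv_cancel _ hc

/-- Let `k` be a complete non-archimedean field and `Q` a monic
polynomial all of whose roots in an algebraically closed extension `L` (with an
absolute value extending that of `k`) have absolute value strictly greater
than `1`. Then `1/Q` lies in the Tate algebra `k{T}`: there is a power series
`Σ a_n T^n` with `‖a_n‖ → 0` which is inverse to `Q`. -/
theorem stmt2 {k L : Type*} [NontriviallyNormedField k] [CompleteSpace k]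
    [NormedField L] [Algebra k L] [IsAlgClosure k L]
    (hna : IsNonarchimedean (fun x : k => ‖x‖))
    (hext : ∀ x : k, ‖algebraMap k L x‖ = ‖x‖)
    (Q : Polynomial k) (hmonic : Q.Monic)
    (hroots : ∀ z : L, (Q.map (algebraMap k L)).IsRoot z → 1 < ‖z‖) :
    ∃ a : ℕ → k,
      Tendsto (fun n => ‖a n‖) atTop (nhds 0) ∧
      (Q : PowerSeries k) * PowerSeries.mk a = 1 :=
  stmt2_general hna hext Q hmonic hroots
end

section
/- Let p be a prime and define f: ℤ_p → ℤ_p by f(Σ_{i≥0} x_i p^i) = Σ_{i≥0} x_i p^{2i}, where x_i ∈ {0,…,p−1} are the p-adic digits. Then for all x, y ∈ ℤ_p, |f(x) − f(y)|_p = |x − y|_p². In particular f is continuous. -/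
/-!
Let `n = v_p(x - y)`. The digits of `x` and `y` agree below position `n` and differ at `n`, so
`f x - f y = ∑ (x_i - y_i) p^{2i}` has a unit coefficient at `p^{2n}`, no terms below it and only
terms of norm `≤ p^{-2n-2}` above it. In the ultrametric `ℤ_p` the norm of such a sum is that of
its leading term, `p^{-2n} = ‖x - y‖²`.
-/

/-- The `i`-th `p`-adic digit of `x ∈ ℤ_p`. -/
noncomputable def padicDigit {p : ℕ} [Fact p.Prime] (x : ℤ_[p]) (i : ℕ) : ℕ :=
  x.appr (i + 1) / p ^ i

/-- The digit-spreading map `f(Σ x_i p^i) = Σ x_i p^{2i}`. -/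
noncomputable def digitSpread {p : ℕ} [Fact p.Prime] (x : ℤ_[p]) : ℤ_[p] :=
  ∑' i : ℕ, (padicDigit x i : ℤ_[p]) * (p : ℤ_[p]) ^ (2 * i)

lemma IsUltrametricDist.norm_eq_of_hasSum_of_norm_le_lt {ι E : Type*} [NormedAddCommGroup E]
    [IsUltrametricDist E] [DecidableEq ι] {g : ι → E} {s : E} (hs : HasSum g s) {n : ι} {C : ℝ}
    (hC₀ : 0 ≤ C) (hC : C < ‖g n‖) (hg : ∀ i ≠ n, ‖g i‖ ≤ C) : ‖s‖ = ‖g n‖ := by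
  have hrest : HasSum (Function.update g n 0) (s - g n) := by
    simpa [sub_eq_neg_add] using hs.update n 0
  have hle : ‖s - g n‖ ≤ C := by
    rw [← hrest.tsum_eq]
    refine norm_tsum_le_of_forall_le_of_nonneg hC₀ fun i => ?_
    rcases eq_or_ne i n with rfl | hi
    · simpa using hC₀
    · simpa [hi] using hg i hi
  have hsplit : s = g n + (s - g n) := by abel
  rw [hsplit, norm_add_eq_max_of_norm_ne_norm (hle.trans_lt hC).ne', max_eq_left (hle.trans hC.le)]

namespace PadicInt

variable {p : ℕ} [hp : Fact p.Prime]

lemma norm_p_pos : 0 < ‖(p : ℤ_[p])‖ := by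
  rw [norm_p]
  exact inv_pos.2 (Nat.cast_pos.2 hp.out.pos)

lemma norm_p_lt_one : ‖(p : ℤ_[p])‖ < 1 :=
  (norm_lt_one_iff_dvd _).2 dvd_rfl

lemma appr_eq_appr_iff {x y : ℤ_[p]} {n : ℕ} :
    x.appr n = y.appr n ↔ ‖x - y‖ ≤ ‖(p : ℤ_[p])‖ ^ n := by
  have hval (z : ℤ_[p]) : (toZModPow n z).val = z.appr n := ZMod.val_natCast_of_lt (z.appr_lt n)
  rw [← norm_pow, norm_p_pow, norm_le_pow_iff_mem_span_pow, ← ker_toZModPow,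
    RingHom.sub_mem_ker_iff]
  exact ⟨fun h => ZMod.val_injective _ (by rw [hval, hval, h]), fun h => by rw [← hval, h, hval]⟩

lemma summable_mul_pow (c : ℕ → ℤ_[p]) {q : ℤ_[p]} (hq : ‖q‖ < 1) :
    Summable fun i => c i * q ^ i := by
  refine NonarchimedeanAddGroup.summable_of_tendsto_cofinite_zero ?_
  rw [Nat.cofinite_eq_atTop]
  refine squeeze_zero_norm (fun i => ?_) (tendsto_pow_atTop_nhds_zero_of_lt_one (norm_nonneg q) hq)
  rw [norm_mul, norm_pow]
  exact mul_le_of_le_one_left (by positivity) (norm_le_one _)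

lemma norm_natCast_sub_natCast_of_lt {a b : ℕ} (ha : a < p) (hb : b < p) (hab : a ≠ b) :
    ‖(a : ℤ_[p]) - b‖ = 1 := by
  refine le_antisymm (norm_le_one _) (not_lt.1 fun h => hab ?_)
  rw [show (a : ℤ_[p]) - b = ((a - b : ℤ) : ℤ_[p]) by push_cast; ring,
    norm_int_lt_one_iff_dvd] at h
  exact (Int.natCast_modEq_iff.1 (Int.modEq_iff_dvd.2 h).symm).eq_of_lt_of_lt ha hb

end PadicInt

open PadicInt

section DigitSpread

variable {p : ℕ} [hp : Fact p.Prime]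

lemma padicDigit_lt (x : ℤ_[p]) (i : ℕ) : padicDigit x i < p := by
  rw [padicDigit, Nat.div_lt_iff_lt_mul (pow_pos hp.out.pos i), ← pow_succ']
  exact x.appr_lt (i + 1)

lemma appr_succ_eq_add_padicDigit (x : ℤ_[p]) (i : ℕ) :
    x.appr (i + 1) = x.appr i + padicDigit x i * p ^ i := by
  obtain ⟨c, hc⟩ := x.dvd_appr_sub_appr i (i + 1) i.le_succ
  have hsucc : x.appr (i + 1) = x.appr i + c * p ^ i := by
    rw [mul_comm, ← hc, Nat.add_sub_cancel' (x.appr_mono i.le_succ)]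
  rw [padicDigit, hsucc, Nat.add_mul_div_right _ _ (pow_pos hp.out.pos i),
    Nat.div_eq_of_lt (x.appr_lt i), zero_add]

lemma padicDigit_eq_of_norm_sub_le {x y : ℤ_[p]} {n i : ℕ} (hi : i < n)
    (h : ‖x - y‖ ≤ ‖(p : ℤ_[p])‖ ^ n) : padicDigit x i = padicDigit y i := by
  rw [padicDigit, padicDigit, appr_eq_appr_iff.2
    (h.trans (pow_le_pow_of_le_one (norm_nonneg _) (norm_le_one _) hi))]

lemma padicDigit_ne_of_norm_sub_eq {x y : ℤ_[p]} {n : ℕ} (h : ‖x - y‖ = ‖(p : ℤ_[p])‖ ^ n) :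
    padicDigit x n ≠ padicDigit y n := by
  intro hd
  have happr : x.appr (n + 1) = y.appr (n + 1) := by
    rw [appr_succ_eq_add_padicDigit, appr_succ_eq_add_padicDigit, appr_eq_appr_iff.2 h.le, hd]
  have hlt := pow_lt_pow_right_of_lt_one₀ (norm_p_pos (p := p)) norm_p_lt_one (lt_add_one n)
  linarith [appr_eq_appr_iff.1 happr]

lemma hasSum_digitSpread (x : ℤ_[p]) :
    HasSum (fun i => (padicDigit x i : ℤ_[p]) * (p : ℤ_[p]) ^ (2 * i)) (digitSpread x) := by
  have hq : ‖(p : ℤ_[p]) ^ 2‖ < 1 := by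
    rw [norm_pow]
    exact pow_lt_one₀ (norm_nonneg _) norm_p_lt_one two_ne_zero
  simpa only [digitSpread, pow_mul] using (summable_mul_pow (fun i => (padicDigit x i : ℤ_[p])) hq).hasSum

lemma norm_digitSpread_sub_of_norm_sub_eq {x y : ℤ_[p]} {n : ℕ}
    (h : ‖x - y‖ = ‖(p : ℤ_[p])‖ ^ n) :
    ‖digitSpread x - digitSpread y‖ = ‖(p : ℤ_[p])‖ ^ (2 * n) := by
  set g : ℕ → ℤ_[p] := fun i => ((padicDigit x i : ℤ_[p]) - padicDigit y i) * (p : ℤ_[p]) ^ (2 * i)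
  have hs : HasSum g (digitSpread x - digitSpread y) := by
    simpa only [g, sub_mul] using (hasSum_digitSpread x).sub (hasSum_digitSpread y)
  have hnorm (i : ℕ) :
      ‖g i‖ = ‖(padicDigit x i : ℤ_[p]) - padicDigit y i‖ * ‖(p : ℤ_[p])‖ ^ (2 * i) := by
    rw [norm_mul, norm_pow]
  have hgn : ‖g n‖ = ‖(p : ℤ_[p])‖ ^ (2 * n) := by
    rw [hnorm, norm_natCast_sub_natCast_of_lt (padicDigit_lt x n) (padicDigit_lt y n)
      (padicDigit_ne_of_norm_sub_eq h), one_mul]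
  rw [← hgn]
  refine IsUltrametricDist.norm_eq_of_hasSum_of_norm_le_lt hs (C := ‖(p : ℤ_[p])‖ ^ (2 * n + 2))
    (by positivity) ?_ fun i hi => ?_
  · rw [hgn]
    exact pow_lt_pow_right_of_lt_one₀ (norm_p_pos (p := p)) norm_p_lt_one (by omega)
  rcases hi.lt_or_gt with hi | hi
  · simp only [g, padicDigit_eq_of_norm_sub_le hi h.le, sub_self, zero_mul, norm_zero]
    positivity
  · rw [hnorm]
    calc _ ≤ 1 * ‖(p : ℤ_[p])‖ ^ (2 * i) := by gcongr; exact norm_le_one _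
      _ ≤ ‖(p : ℤ_[p])‖ ^ (2 * n + 2) := by
        rw [one_mul]
        exact pow_le_pow_of_le_one (norm_nonneg _) (norm_le_one _) (by omega)

lemma norm_digitSpread_sub (x y : ℤ_[p]) :
    ‖digitSpread x - digitSpread y‖ = ‖x - y‖ ^ 2 := by
  rcases eq_or_ne x y with rfl | hxy
  · simp
  have hval : ‖x - y‖ = ‖(p : ℤ_[p])‖ ^ (x - y).valuation := by
    conv_lhs => rw [unitCoeff_spec (sub_ne_zero.2 hxy)]
    rw [norm_mul, norm_units, one_mul, norm_pow]
  rw [norm_digitSpread_sub_of_norm_sub_eq hval, hval, ← pow_mul, mul_comm]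

lemma lipschitzWith_digitSpread : LipschitzWith 1 (digitSpread (p := p)) := by
  refine LipschitzWith.of_dist_le_mul fun x y => ?_
  rw [dist_eq_norm, dist_eq_norm, norm_digitSpread_sub, NNReal.coe_one, one_mul, sq]
  exact mul_le_of_le_one_left (norm_nonneg _) (norm_le_one _)

end DigitSpread

/-- `|f(x) - f(y)|_p = |x - y|_p²` for all `x, y ∈ ℤ_p`; in
particular `f` is continuous. -/
theorem stmt14 {p : ℕ} [Fact p.Prime] :
    (∀ x y : ℤ_[p], ‖digitSpread x - digitSpread y‖ = ‖x - y‖ ^ 2) ∧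
      Continuous (digitSpread (p := p)) :=
  ⟨norm_digitSpread_sub, lipschitzWith_digitSpread.continuous⟩
end
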